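/- Chebyshev polynomials of the first kind satisfy T_n(x) = (J_n^{(-1/2,-1/2)}(x)) / (J_n^{(-1/2,-1/2)}(1)) for all n and x, i.e., the Jacobi polynomial with α = β = -1/2 equals T_n up to the normalization constant J_n^{(-1/2,-1/2)}(1) = (1/2)_n / n!. -/

import Mathlib

/-- Pochhammer (rising factorial) symbol `(a)_n` for a real `a`. -/
noncomputable def poch (a : ℝ) (n : ℕ) : ℝ := (ascPochhammer ℝ n).eval a

/-- Gauss hypergeometric series `₂F₁(a, b; c; x)`. -/
noncomputable def F21 (a b c x : ℝ) : ℝ :=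
  ∑' n : ℕ, poch a n * poch b n / poch c n * x ^ n / (Nat.factorial n)

/-- Jacobi polynomial `J_n^{(α,β)}(x)` via its hypergeometric representation. -/
noncomputable def jacobi (α β : ℝ) (n : ℕ) (x : ℝ) : ℝ :=
  poch (α + 1) n / (Nat.factorial n) *
    F21 (-(n : ℝ)) ((n : ℝ) + 1 + α + β) (1 + α) ((1 - x) / 2)

/-- Chebyshev polynomials of the first kind via the three-term recurrence. -/
noncomputable def cheb : ℕ → ℝ → ℝ
  | 0, _ => 1
  | 1, x => x
  | (n + 2), x => 2 * x * cheb (n + 1) x - cheb n x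

/-!
With `α = β = -1/2` the Jacobi polynomial is `(1/2)_n / n!` times the terminating series
`₂F₁(-n, n; 1/2; y)` in `y = (1 - x)/2`, whose value at `x = 1` is `1`. The coefficients
`c(m, k) = (-m)_k (m)_k / ((1/2)_k k!)` of that series satisfy
`c(m+1, k+1) + c(m-1, k+1) - 2 c(m, k+1) = -4 c(m, k)`, which coefficientwise is Chebyshev's
recurrence `p_{n+2} = 2 (1 - 2y) p_{n+1} - p_n` with `x = 1 - 2y`. The identity comes from
`(-m)_k (m)_k = ∏_{i<k} (i² - m²)`: after cancelling the common factors, its central second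
difference in `m` is a cubic identity.
-/

open Finset Polynomial
open scoped Nat

theorem poch_succ_left (a : ℝ) (k : ℕ) : poch a (k + 1) = a * poch (a + 1) k := by
  simp [poch, ascPochhammer_succ_left]

theorem poch_succ (a : ℝ) (k : ℕ) : poch a (k + 1) = poch a k * (a + k) :=
  ascPochhammer_succ_eval k a

theorem poch_neg_natCast_eq_zero {n k : ℕ} (h : n < k) : poch (-n) k = 0 :=
  ascPochhammer_eval_neg_coe_nat_of_lt h

theorem poch_pos {a : ℝ} (ha : 0 < a) (k : ℕ) : 0 < poch a k :=
  ascPochhammer_pos k a ha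

theorem F21_zero (a b c : ℝ) : F21 a b c 0 = 1 := by
  rw [F21, tsum_eq_single 0 fun k hk => by simp [zero_pow hk]]
  simp [poch]

theorem poch_neg_mul_poch_second_diff (m : ℝ) (k : ℕ) :
    poch (-(m + 1)) (k + 1) * poch (m + 1) (k + 1) + poch (-(m - 1)) (k + 1) * poch (m - 1) (k + 1)
      - 2 * (poch (-m) (k + 1) * poch m (k + 1))
      = -((2 * k + 1) * (2 * k + 2)) * (poch (-m) k * poch m k) := by
  rcases k with _ | j
  · simp only [poch, zero_add, ascPochhammer_one, ascPochhammer_zero, eval_X, eval_one,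
      CharP.cast_eq_zero]
    ring
  · have peel_left (a b : ℝ) (h : b = a + 2) : poch a (j + 2) = a * (a + 1) * poch b j := by
      rw [poch_succ_left, poch_succ_left, h]; ring_nf
    have peel_both (a b : ℝ) (h : b = a + 1) : poch a (j + 2) = a * poch b j * (b + j) := by
      rw [poch_succ_left, poch_succ, h]; ring
    have peel_right (a : ℝ) : poch a (j + 2) = poch a j * (a + j) * (a + j + 1) := by
      rw [poch_succ, poch_succ]; push_cast; ring
    -- every factor is written through the common cores `(1 - m)_j` and `(m + 1)_j`
    rw [peel_left (-(m + 1)) (1 - m) (by ring), peel_right (m + 1),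
      peel_right (-(m - 1)), peel_left (m - 1) (m + 1) (by ring),
      peel_both (-m) (1 - m) (by ring), peel_both m (m + 1) (by ring),
      poch_succ_left (-m), poch_succ_left m,
      show -m + 1 = 1 - m by ring, show -(m - 1) = 1 - m by ring]
    push_cast
    ring

noncomputable def chebCoeff (m : ℝ) (k : ℕ) : ℝ :=
  poch (-m) k * poch m k / (poch (1 / 2) k * k !)

theorem chebCoeff_zero (m : ℝ) : chebCoeff m 0 = 1 := by
  simp [chebCoeff, poch]

theorem chebCoeff_natCast_eq_zero {n k : ℕ} (h : n < k) : chebCoeff n k = 0 := by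
  simp [chebCoeff, poch_neg_natCast_eq_zero h]

theorem chebCoeff_second_diff (m : ℝ) (k : ℕ) :
    chebCoeff (m + 1) (k + 1) + chebCoeff (m - 1) (k + 1) - 2 * chebCoeff m (k + 1)
      = -4 * chebCoeff m k := by
  have hpoch : poch (1 / 2) k ≠ 0 := (poch_pos one_half_pos k).ne'
  have hfact : (k ! : ℝ) ≠ 0 := by positivity
  simp only [chebCoeff, poch_succ (1 / 2), Nat.factorial_succ]
  push_cast
  field_simp
  linear_combination 2 * poch_neg_mul_poch_second_diff m k

noncomputable def chebPoly (n : ℕ) : ℝ[X] :=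
  ∑ k ∈ range (n + 1), C (chebCoeff n k) * X ^ k

theorem coeff_chebPoly (n k : ℕ) : (chebPoly n).coeff k = chebCoeff n k := by
  simp only [chebPoly, finsetSum_coeff, coeff_C_mul_X_pow, sum_ite_eq, mem_range]
  split_ifs with h
  · rfl
  · exact (chebCoeff_natCast_eq_zero (by omega)).symm

theorem chebPoly_add_two (n : ℕ) :
    chebPoly (n + 2) = 2 * (1 - 2 * X) * chebPoly (n + 1) - chebPoly n := by
  ext (_ | k)
  · norm_num [coeff_chebPoly, chebCoeff_zero]
  · have h := chebCoeff_second_diff (n + 1) k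
    rw [add_sub_cancel_right] at h
    simp only [coeff_chebPoly, coeff_sub, coeff_ofNat_mul, coeff_X_mul, mul_sub, sub_mul,
      mul_one, mul_assoc]
    push_cast
    rw [show (n : ℝ) + 2 = n + 1 + 1 by ring]
    linear_combination h

theorem cheb_eq_eval_chebPoly (n : ℕ) (x : ℝ) : cheb n x = (chebPoly n).eval ((1 - x) / 2) := by
  induction n using Nat.twoStepInduction with
  | zero => simp [cheb, chebPoly, chebCoeff_zero]
  | one =>
    have h : chebCoeff 1 1 = -2 := by norm_num [chebCoeff, poch]
    simp only [cheb, chebPoly, sum_range_succ, sum_range_zero, Nat.cast_one, chebCoeff_zero, h,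
      pow_zero, pow_one, eval_add, eval_mul, eval_C, eval_X, eval_one, eval_zero]
    ring
  | more n ih₀ ih₁ =>
    rw [cheb, ih₀, ih₁, chebPoly_add_two]
    simp only [eval_sub, eval_mul, eval_ofNat, eval_one, eval_X]
    ring

theorem F21_eq_eval_chebPoly (n : ℕ) (y : ℝ) :
    F21 (-n) n (1 / 2) y = (chebPoly n).eval y := by
  have hterm (k : ℕ) :
      poch (-n) k * poch n k / poch (1 / 2) k * y ^ k / k ! = chebCoeff n k * y ^ k := by
    rw [chebCoeff]; ring
  rw [F21, tsum_congr hterm, tsum_eq_sum (s := range (n + 1)), chebPoly, eval_finsetSum]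
  · simp
  · intro k hk
    rw [chebCoeff_natCast_eq_zero (by simpa using hk), zero_mul]

theorem jacobi_neg_half (n : ℕ) (x : ℝ) :
    jacobi (-1/2) (-1/2) n x = poch (1 / 2) n / n ! * F21 (-n) n (1 / 2) ((1 - x) / 2) := by
  rw [jacobi, show (n : ℝ) + 1 + -1/2 + -1/2 = n by ring]
  norm_num

theorem chebyshev_eq_normalized_jacobi (n : ℕ) (x : ℝ) :
    cheb n x = jacobi (-1/2) (-1/2) n x / jacobi (-1/2) (-1/2) n 1 ∧
    jacobi (-1/2) (-1/2) n 1 = poch (1/2) n / (Nat.factorial n) := by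
  have h_one : jacobi (-1/2) (-1/2) n 1 = poch (1/2) n / (Nat.factorial n) := by
    rw [jacobi_neg_half, sub_self, zero_div, F21_zero, mul_one]
  have h_ne : poch (1/2) n / (Nat.factorial n) ≠ 0 := by
    have := poch_pos one_half_pos n
    positivity
  refine ⟨?_, h_one⟩
  rw [h_one, jacobi_neg_half, mul_div_cancel_left₀ _ h_ne, F21_eq_eval_chebPoly,
    cheb_eq_eval_chebPoly]
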